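/- arXiv:1903.00176 — 2 statements merged into one kernel-verified Lean document; each statement's English description precedes it below -/
import Mathlib

section
/- Let t > s > 0 be positive integers, N a positive integer, and s < u ≤ t. Then for every integer ℓ ≥ 0 and every real z, ∫_ℝ κ_{u−s}(z−x) L̃_ℓ^{N(s−1)}(x) w_{N(s−1),1}(x) dx = (r_ℓ^{N(s−1)} / r_ℓ^{N(u−1)}) · L̃_ℓ^{N(u−1)}(z) · w_{N(u−1),1}(z). -/
/-!
Multiplying by the gamma weight turns the Laguerre polynomial into a signed binomial combination of
gamma densities, `L̃_ℓ^a · w_{a,1} = Γ(a+ℓ+1)/Γ(a+1) · Σ_k (-1)^(ℓ-k) C(ℓ,k) w_{a+k,1}`, and gamma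
densities convolve by adding shapes, `w_{c,1} ⋆ w_{a,1} = w_{a+c+1,1}` (a beta integral).
Since `κ_{u-s} = w_{c,1}` with `c = N(u-s) - 1`, convolving term by term replaces each `a + k`
by `b + k` with `b = a + c + 1 = N(u-1)`, and the same identity read backwards at `b` gives the
result.
-/

open MeasureTheory

/-- The gamma weight `w_{a,b}(x) = b^{a+1}/Γ(a+1) · x^a e^{-bx}` for `x > 0`,
and `0` otherwise. -/
noncomputable def w (a b x : ℝ) : ℝ :=
  if 0 < x then b ^ (a + 1) / Real.Gamma (a + 1) * x ^ a * Real.exp (-(b * x)) else 0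

/-- `κ_τ(x) := w_{Nτ-1,1}(x)`. -/
noncomputable def kappa (N : ℕ) (τ : ℝ) (x : ℝ) : ℝ :=
  w ((N : ℝ) * τ - 1) 1 x

/-- The monic Laguerre polynomial with index `a`:
`L̃_n^a(x) = Σ_{k=0}^n (-1)^{n-k} (n!/(n-k)!) (Γ(a+n+1)/Γ(a+k+1)) x^k/k!`. -/
noncomputable def Lag (a : ℝ) (n : ℕ) (x : ℝ) : ℝ :=
  ∑ k ∈ Finset.range (n + 1),
    (-1 : ℝ) ^ (n - k) * ((n.factorial : ℝ) / ((n - k).factorial : ℝ))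
      * (Real.Gamma (a + n + 1) / Real.Gamma (a + k + 1)) * x ^ k / (k.factorial : ℝ)

/-- The squared norm `r_ℓ^a = ℓ! Γ(a+ℓ+1)/Γ(a+1)` of the monic Laguerre
polynomial `L̃_ℓ^a` with respect to the weight `w_{a,1}`. -/
noncomputable def rconst (a : ℝ) (l : ℕ) : ℝ :=
  (l.factorial : ℝ) * Real.Gamma (a + l + 1) / Real.Gamma (a + 1)

open Set

lemma integral_rpow_mul_sub_rpow {a c z : ℝ} (ha : -1 < a) (hc : -1 < c) (hz : 0 < z) :
    ∫ x in (0 : ℝ)..z, x ^ a * (z - x) ^ c =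
      ProbabilityTheory.beta (a + 1) (c + 1) * z ^ (a + c + 1) := by
  have h := congrArg Complex.re (Complex.betaIntegral_scaled (a + 1 : ℝ) (c + 1 : ℝ) hz)
  have hL : (∫ x in (0 : ℝ)..z,
        (x : ℂ) ^ (((a + 1 : ℝ) : ℂ) - 1) * ((z : ℂ) - x) ^ (((c + 1 : ℝ) : ℂ) - 1))
      = ((∫ x in (0 : ℝ)..z, x ^ a * (z - x) ^ c : ℝ) : ℂ) := by
    rw [← intervalIntegral.integral_ofReal]
    refine intervalIntegral.integral_congr fun x hx => ?_
    rw [uIcc_of_le hz.le] at hx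
    simp only [Complex.ofReal_mul, Complex.ofReal_cpow hx.1,
      Complex.ofReal_cpow (sub_nonneg.2 hx.2)]
    push_cast
    ring_nf
  have hR :
      (z : ℂ) ^ (((a + 1 : ℝ) : ℂ) + ((c + 1 : ℝ) : ℂ) - 1) = ((z ^ (a + c + 1) : ℝ) : ℂ) := by
    rw [Complex.ofReal_cpow hz.le]
    push_cast
    ring_nf
  rw [hL, hR, Complex.ofReal_re, Complex.re_ofReal_mul,
    ← ProbabilityTheory.beta_eq_betaIntegralReal _ _ (by linarith) (by linarith)] at h
  rw [h, mul_comm]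

lemma w_sub_mul_w_eq_indicator (a c z : ℝ) :
    (fun x => w c 1 (z - x) * w a 1 x) = (Ioo 0 z).indicator fun x =>
      Real.exp (-z) / (Real.Gamma (a + 1) * Real.Gamma (c + 1)) * (x ^ a * (z - x) ^ c) := by
  funext x
  by_cases hx : x ∈ Ioo 0 z
  · rw [indicator_of_mem hx, w, w, if_pos hx.1, if_pos (sub_pos.2 hx.2)]
    have hexp : Real.exp (-(1 * (z - x))) * Real.exp (-(1 * x)) = Real.exp (-z) := by
      rw [← Real.exp_add]; ring_nf
    simp only [Real.one_rpow, one_mul] at hexp ⊢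
    rw [← hexp]; ring
  · rw [indicator_of_notMem hx]
    rcases not_and_or.1 hx with hx0 | hxz
    · rw [show w a 1 x = 0 from if_neg hx0, mul_zero]
    · rw [show w c 1 (z - x) = 0 from if_neg (by linarith [not_lt.1 hxz]), zero_mul]

lemma integrable_w_sub_mul_w {a c : ℝ} (ha : 0 ≤ a) (hc : 0 ≤ c) (z : ℝ) :
    Integrable fun x => w c 1 (z - x) * w a 1 x := by
  have hcont : Continuous fun x : ℝ => x ^ a * (z - x) ^ c :=
    (continuous_id.rpow_const fun _ => Or.inr ha).mul
      ((continuous_const.sub continuous_id).rpow_const fun _ => Or.inr hc)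
  rw [w_sub_mul_w_eq_indicator]
  exact IntegrableOn.integrable_indicator
    ((hcont.integrableOn_Icc.mono_set Ioo_subset_Icc_self).const_mul _) measurableSet_Ioo

lemma integral_w_sub_mul_w {a c : ℝ} (ha : 0 ≤ a) (hc : 0 ≤ c) (z : ℝ) :
    ∫ x, w c 1 (z - x) * w a 1 x = w (a + c + 1) 1 z := by
  rw [w_sub_mul_w_eq_indicator, integral_indicator measurableSet_Ioo]
  by_cases hz : 0 < z
  · rw [← integral_Ioc_eq_integral_Ioo, ← intervalIntegral.integral_of_le hz.le,
      intervalIntegral.integral_const_mul,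
      integral_rpow_mul_sub_rpow (by linarith) (by linarith) hz,
      ProbabilityTheory.beta, w, if_pos hz, show a + 1 + (c + 1) = a + c + 1 + 1 by ring]
    have := Real.Gamma_pos_of_pos (show 0 < a + 1 by linarith)
    have := Real.Gamma_pos_of_pos (show 0 < c + 1 by linarith)
    simp only [Real.one_rpow, one_mul]
    field_simp
  · rw [Ioo_eq_empty (by simpa using hz), Measure.restrict_empty, integral_zero_measure, w,
      if_neg hz]

lemma pow_mul_w {a : ℝ} (ha : -1 < a) (k : ℕ) (x : ℝ) :
    x ^ k * w a 1 x = Real.Gamma (a + k + 1) / Real.Gamma (a + 1) * w (a + k) 1 x := by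
  by_cases hx : 0 < x
  · have := Real.Gamma_pos_of_pos (show 0 < a + 1 by linarith)
    have := Real.Gamma_pos_of_pos (show 0 < a + k + 1 by linarith [k.cast_nonneg (α := ℝ)])
    rw [w, w, if_pos hx, if_pos hx, Real.rpow_add hx, Real.rpow_natCast]
    simp only [Real.one_rpow, one_mul]
    field_simp
  · rw [w, w, if_neg hx, if_neg hx, mul_zero, mul_zero]

lemma Lag_mul_w {a : ℝ} (ha : -1 < a) (l : ℕ) (x : ℝ) :
    Lag a l x * w a 1 x = Real.Gamma (a + l + 1) / Real.Gamma (a + 1) *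
      ∑ k ∈ Finset.range (l + 1), (-1 : ℝ) ^ (l - k) * l.choose k * w (a + k) 1 x := by
  rw [Lag, Finset.sum_mul, Finset.mul_sum]
  refine Finset.sum_congr rfl fun k hk => ?_
  have hkl : k ≤ l := Nat.lt_succ_iff.1 (Finset.mem_range.1 hk)
  have := Real.Gamma_pos_of_pos (show 0 < a + k + 1 by linarith [k.cast_nonneg (α := ℝ)])
  have hpow := pow_mul_w ha k x
  rw [Nat.cast_choose ℝ hkl]
  calc _ = (-1 : ℝ) ^ (l - k) * (l.factorial / (l - k).factorial)
        * (Real.Gamma (a + l + 1) / Real.Gamma (a + k + 1)) / k.factorial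
        * (x ^ k * w a 1 x) := by ring
    _ = _ := by rw [hpow]; field_simp

lemma integral_w_sub_mul_Lag_mul_w {a c : ℝ} (ha : 0 ≤ a) (hc : 0 ≤ c) (l : ℕ) (z : ℝ) :
    ∫ x, w c 1 (z - x) * Lag a l x * w a 1 x
      = rconst a l / rconst (a + c + 1) l * Lag (a + c + 1) l z * w (a + c + 1) 1 z := by
  set b := a + c + 1
  have hsum : ∀ x, w c 1 (z - x) * Lag a l x * w a 1 x =
      Real.Gamma (a + l + 1) / Real.Gamma (a + 1) * ∑ k ∈ Finset.range (l + 1),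
        (-1 : ℝ) ^ (l - k) * l.choose k * (w c 1 (z - x) * w (a + k) 1 x) := by
    intro x
    rw [mul_assoc, Lag_mul_w (by linarith) l x, Finset.mul_sum, Finset.mul_sum, Finset.mul_sum]
    exact Finset.sum_congr rfl fun k _ => by ring
  have hterm : ∀ k ∈ Finset.range (l + 1),
      ∫ x, (-1 : ℝ) ^ (l - k) * l.choose k * (w c 1 (z - x) * w (a + k) 1 x)
        = (-1 : ℝ) ^ (l - k) * l.choose k * w (b + k) 1 z := by
    intro k _
    rw [integral_const_mul, integral_w_sub_mul_w (by positivity) hc,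
      show a + k + c + 1 = b + k by ring]
  have hLag_b := Lag_mul_w (show -1 < b by linarith) l z
  have := Real.Gamma_pos_of_pos (show 0 < a + 1 by linarith)
  have := Real.Gamma_pos_of_pos (show 0 < b + 1 by linarith)
  have := Real.Gamma_pos_of_pos (show 0 < b + l + 1 by positivity)
  simp only [hsum]
  rw [integral_const_mul, integral_finsetSum _ fun k _ =>
      ((integrable_w_sub_mul_w (by positivity) hc z).const_mul _),
    Finset.sum_congr rfl hterm, mul_assoc _ (Lag b l z), hLag_b, rconst, rconst]
  field_simp

theorem laguerre_Q_transform_general (N : ℕ) (hN : 0 < N) (s u : ℕ) (hs : 0 < s)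
    (hsu : s < u) (l : ℕ) (z : ℝ) :
    (∫ x : ℝ, kappa N ((u : ℝ) - s) (z - x) * Lag ((N : ℝ) * ((s : ℝ) - 1)) l x
        * w ((N : ℝ) * ((s : ℝ) - 1)) 1 x)
      = rconst ((N : ℝ) * ((s : ℝ) - 1)) l / rconst ((N : ℝ) * ((u : ℝ) - 1)) l
          * Lag ((N : ℝ) * ((u : ℝ) - 1)) l z * w ((N : ℝ) * ((u : ℝ) - 1)) 1 z := by
  have hN' : (1 : ℝ) ≤ N := by exact_mod_cast hN
  have hs' : (1 : ℝ) ≤ s := by exact_mod_cast hs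
  have hsu' : (s : ℝ) + 1 ≤ u := by exact_mod_cast hsu
  have key := integral_w_sub_mul_Lag_mul_w (a := N * ((s : ℝ) - 1)) (c := N * ((u : ℝ) - s) - 1)
    (by nlinarith) (by nlinarith) l z
  rwa [show (N : ℝ) * (s - 1) + (N * (u - s) - 1) + 1 = N * (u - 1) by ring] at key

/-- For positive integers `t > s > 0` and `s < u ≤ t`,
`∫ κ_{u-s}(z-x) L̃_ℓ^{N(s-1)}(x) w_{N(s-1),1}(x) dx
  = (r_ℓ^{N(s-1)}/r_ℓ^{N(u-1)}) L̃_ℓ^{N(u-1)}(z) w_{N(u-1),1}(z)`. -/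
theorem laguerre_Q_transform (N : ℕ) (hN : 0 < N) (t s u : ℕ) (hs : 0 < s) (hst : s < t)
    (hsu : s < u) (hut : u ≤ t) (l : ℕ) (z : ℝ) :
    (∫ x : ℝ, kappa N ((u : ℝ) - s) (z - x) * Lag ((N : ℝ) * ((s : ℝ) - 1)) l x
        * w ((N : ℝ) * ((s : ℝ) - 1)) 1 x)
      = rconst ((N : ℝ) * ((s : ℝ) - 1)) l / rconst ((N : ℝ) * ((u : ℝ) - 1)) l
          * Lag ((N : ℝ) * ((u : ℝ) - 1)) l z * w ((N : ℝ) * ((u : ℝ) - 1)) 1 z :=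
  laguerre_Q_transform_general N hN s u hs hsu l z
end

section
/- Let t > s > 0 be positive integers, N a positive integer, and s ≤ u < t. Then for every integer k ≥ 0 and every real z, ∫_ℝ L̃_k^{N(t−1)}(y) κ_{t−u}(y−z) dy = L̃_k^{N(u−1)}(z). -/
open MeasureTheory

/-!
The monic Laguerre polynomial is a coefficient of a product of generating series,
`L̃_k^a(y) = k! [X^k] e^{yX} (1 - X)^{a+k}`, because the Gamma ratios in its coefficients are
rising factorials, i.e. generalized binomial coefficients. Likewise the moments of the weight are
`∫ x^m w_{c,1}(x) dx = m! [X^m] (1 - X)^{-(c+1)}`. After the substitution `y = x + z`,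
`e^{(x+z)X} = e^{xX} e^{zX}`, so integrating against `w_{c,1}(x)` multiplies the series by
`(1 - X)^{-(c+1)}` and turns `L̃_k^{b+c+1}(z)` into `L̃_k^b(z)`; the theorem is the case
`b = N(u-1)`, `c = N(t-u) - 1`.

The power series `(1 - X)^r` is written `rescale (-1) (binomialSeries ℝ r)`.
-/

open PowerSeries Set Real

lemma Real.Gamma_add_nat_div_Gamma {s : ℝ} (hs : 0 < s) (n : ℕ) :
    Gamma (s + n) / Gamma s = (ascPochhammer ℝ n).eval s := by
  induction n with
  | zero => simp [(Gamma_pos_of_pos hs).ne']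
  | succ n ih =>
    rw [Nat.cast_succ, ← add_assoc, Gamma_add_one (by positivity), ascPochhammer_succ_eval, ← ih]
    ring

lemma ascPochhammer_eval_eq_factorial_mul_multichoose {R : Type*} [CommRing R] [BinomialRing R]
    (r : R) (n : ℕ) : (ascPochhammer R n).eval r = n.factorial * Ring.multichoose r n := by
  rw [← Polynomial.ascPochhammer_smeval_eq_eval,
    ← Ring.factorial_nsmul_multichoose_eq_ascPochhammer, nsmul_eq_mul]

lemma PowerSeries.coeff_rescale_neg_one_binomialSeries_neg {R : Type*} [CommRing R]
    [BinomialRing R] (r : R) (n : ℕ) :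
    coeff n (rescale (-1 : R) (binomialSeries R (-r))) = Ring.multichoose r n := by
  rw [coeff_rescale, binomialSeries_coeff, Ring.choose_neg', Units.smul_def, smul_eq_mul, mul_one,
    ← Int.cast_negOnePow_natCast, zsmul_eq_mul, ← mul_assoc, ← Int.cast_mul, ← Units.val_mul]
  simp

lemma pow_mul_w_eq_indicator (a b : ℝ) (m : ℕ) :
    (fun x => x ^ m * w a b x) = (Ioi 0).indicator
      fun x => b ^ (a + 1) / Gamma (a + 1) * (x ^ (a + 1 + m - 1) * exp (-(b * x))) := by
  ext x
  by_cases hx : 0 < x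
  · rw [indicator_of_mem (mem_Ioi.2 hx), w, if_pos hx, show a + 1 + m - 1 = m + a by ring,
      rpow_add hx, rpow_natCast]
    ring
  · rw [indicator_of_notMem (notMem_Ioi.2 (not_lt.1 hx)), w, if_neg hx, mul_zero]

lemma integrable_pow_mul_w {a b : ℝ} (ha : -1 < a) (hb : 0 < b) (m : ℕ) :
    Integrable (fun x => x ^ m * w a b x) := by
  rw [pow_mul_w_eq_indicator, integrable_indicator_iff measurableSet_Ioi]
  have h := integrableOn_rpow_mul_exp_neg_mul_rpow (s := a + 1 + m - 1) (by linarith) one_pos hb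
  simp only [rpow_one, neg_mul] at h
  exact h.const_mul _

lemma integral_pow_mul_w {a b : ℝ} (ha : -1 < a) (hb : 0 < b) (m : ℕ) :
    ∫ x, x ^ m * w a b x = Gamma (a + 1 + m) / (Gamma (a + 1) * b ^ m) := by
  rw [pow_mul_w_eq_indicator, integral_indicator measurableSet_Ioi, integral_const_mul,
    integral_rpow_mul_exp_neg_mul_Ioi (by linarith) hb, one_div, inv_rpow hb.le,
    rpow_add (by positivity) _ (m : ℝ), rpow_natCast]
  field_simp

lemma integral_pow_mul_w_one {a : ℝ} (ha : -1 < a) (m : ℕ) :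
    ∫ x, x ^ m * w a 1 x = m.factorial * Ring.multichoose (a + 1) m := by
  rw [integral_pow_mul_w ha one_pos, one_pow, mul_one, Gamma_add_nat_div_Gamma (by linarith),
    ascPochhammer_eval_eq_factorial_mul_multichoose]

lemma integral_coeff_rescale_exp_mul_mul_w {a : ℝ} (ha : -1 < a) (F : ℝ⟦X⟧) (k : ℕ) :
    ∫ x, coeff k (rescale x (exp ℝ) * F) * w a 1 x
      = coeff k (rescale (-1 : ℝ) (binomialSeries ℝ (-(a + 1))) * F) := by
  have hterm (p : ℕ × ℕ) (x : ℝ) : coeff p.1 (rescale x (exp ℝ)) * coeff p.2 F * w a 1 x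
      = ((p.1.factorial : ℝ)⁻¹ * coeff p.2 F) * (x ^ p.1 * w a 1 x) := by
    simp only [coeff_rescale, coeff_exp, one_div, map_inv₀, map_natCast]
    ring
  simp only [coeff_mul, Finset.sum_mul, hterm]
  rw [integral_finsetSum _ fun p _ => (integrable_pow_mul_w ha one_pos p.1).const_mul _]
  refine Finset.sum_congr rfl fun p _ => ?_
  rw [integral_const_mul, integral_pow_mul_w_one ha, coeff_rescale_neg_one_binomialSeries_neg]
  field_simp

lemma Lag_eq_factorial_mul_coeff {a : ℝ} (ha : -1 < a) (k : ℕ) (y : ℝ) :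
    Lag a k y = k.factorial
      * coeff k (rescale y (exp ℝ) * rescale (-1 : ℝ) (binomialSeries ℝ (a + k))) := by
  rw [coeff_mul, Finset.Nat.sum_antidiagonal_eq_sum_range_succ_mk, Finset.mul_sum, Lag]
  refine Finset.sum_congr rfl fun i hi => ?_
  have hik : ((k - i : ℕ) : ℝ) = k - i := Nat.cast_sub (Nat.lt_succ_iff.1 (Finset.mem_range.1 hi))
  have hGamma : Gamma (a + k + 1) / Gamma (a + i + 1)
      = (k - i).factorial * Ring.choose (a + k) (k - i) := by
    rw [show a + k + 1 = a + i + 1 + (k - i : ℕ) by rw [hik]; ring,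
      Gamma_add_nat_div_Gamma (by have := i.cast_nonneg (α := ℝ); linarith),
      ascPochhammer_eval_eq_factorial_mul_multichoose, Ring.multichoose_eq, hik]
    ring_nf
  simp only [hGamma, coeff_rescale, coeff_exp, binomialSeries_coeff, one_div, map_inv₀,
    map_natCast, smul_eq_mul, mul_one]
  field_simp

theorem integral_Lag_mul_w_sub {b c : ℝ} (hb : -1 < b) (hc : -1 < c) (k : ℕ) (z : ℝ) :
    ∫ y, Lag (b + c + 1) k y * w c 1 (y - z) = Lag b k z := by
  have hshift : ∫ y, Lag (b + c + 1) k y * w c 1 (y - z)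
      = ∫ x, Lag (b + c + 1) k (x + z) * w c 1 x := by
    simpa using integral_sub_right_eq_self (μ := volume)
      (fun x => Lag (b + c + 1) k (x + z) * w c 1 x) z
  have hexp (x : ℝ) : rescale (x + z) (exp ℝ) = rescale x (exp ℝ) * rescale z (exp ℝ) :=
    (exp_mul_exp_eq_exp_add x z).symm
  have hbinom : rescale (-1 : ℝ) (binomialSeries ℝ (-(c + 1)))
      * rescale (-1 : ℝ) (binomialSeries ℝ (b + c + 1 + k))
      = rescale (-1 : ℝ) (binomialSeries ℝ (b + k)) := by
    rw [← map_mul, ← binomialSeries_add]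
    ring_nf
  rw [hshift, Lag_eq_factorial_mul_coeff hb]
  simp_rw [Lag_eq_factorial_mul_coeff (by linarith : -1 < b + c + 1), hexp, mul_assoc]
  rw [integral_const_mul, integral_coeff_rescale_exp_mul_mul_w hc, mul_left_comm, hbinom]

theorem laguerre_P_transform_general (N : ℕ) (hN : 0 < N) (t s u : ℕ) (hs : 0 < s)
    (hsu : s ≤ u) (hut : u < t) (k : ℕ) (z : ℝ) :
    (∫ y : ℝ, Lag ((N : ℝ) * ((t : ℝ) - 1)) k y * kappa N ((t : ℝ) - u) (y - z))
      = Lag ((N : ℝ) * ((u : ℝ) - 1)) k z := by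
  have hN' : (1 : ℝ) ≤ N := by exact_mod_cast hN
  have hu : (1 : ℝ) ≤ u := by exact_mod_cast hs.trans_le hsu
  have htu : (u : ℝ) + 1 ≤ t := by exact_mod_cast hut
  have hb : -1 < (N : ℝ) * (u - 1) := by nlinarith
  have hc : -1 < (N : ℝ) * (t - u) - 1 := by nlinarith
  have key := integral_Lag_mul_w_sub hb hc k z
  rwa [show (N : ℝ) * (u - 1) + (N * (t - u) - 1) + 1 = N * (t - 1) by ring] at key

/-- For positive integers `t > s > 0` and `s ≤ u < t`,
`∫ L̃_k^{N(t-1)}(y) κ_{t-u}(y-z) dy = L̃_k^{N(u-1)}(z)`. -/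
theorem laguerre_P_transform (N : ℕ) (hN : 0 < N) (t s u : ℕ) (hs : 0 < s) (hst : s < t)
    (hsu : s ≤ u) (hut : u < t) (k : ℕ) (z : ℝ) :
    (∫ y : ℝ, Lag ((N : ℝ) * ((t : ℝ) - 1)) k y * kappa N ((t : ℝ) - u) (y - z))
      = Lag ((N : ℝ) * ((u : ℝ) - 1)) k z :=
  laguerre_P_transform_general N hN t s u hs hsu hut k z
end
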